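/- arXiv:2003.07413 — 4 statements merged into one kernel-verified Lean document; each statement's English description precedes it below -/
import Mathlib

section
/- Let k be a field of characteristic 0, let n ≥ 1, and let 𝔭 be a prime ideal of k[x_0, …, x_n] of height at most n − 1. Then for every integer d ≥ 1, the k-linear subspace 𝔭_d consisting of all homogeneous polynomials of degree d contained in 𝔭 has codimension at least 2 in the space of all homogeneous polynomials of degree d; that is, dim_k(degree-d homogeneous component) − dim_k(𝔭_d) ≥ 2. -/
set_option maxHeartbeats 1000000

open MvPolynomial

namespace Stmt1Aux

variable {k : Type*} [Field k]

lemma sub_aeval_mem {σ : Type*} (𝔭 : Ideal (MvPolynomial σ k))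
    (φ : σ → MvPolynomial σ k) (hφ : ∀ i, X i - φ i ∈ 𝔭) (p : MvPolynomial σ k) :
    p - MvPolynomial.aeval φ p ∈ 𝔭 := by
  induction p using MvPolynomial.induction_on with
  | C a => simp [MvPolynomial.algebraMap_eq]
  | add p q hp hq =>
      have h := 𝔭.add_mem hp hq
      rw [map_add]
      convert h using 1
      ring
  | mul_X p i hp =>
      have h1 : p * X i - MvPolynomial.aeval φ (p * X i)
          = (p - MvPolynomial.aeval φ p) * X i
            + MvPolynomial.aeval φ p * (X i - φ i) := by
        rw [map_mul, aeval_X]; ring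
      rw [h1]
      exact 𝔭.add_mem (𝔭.mul_mem_right _ hp) (𝔭.mul_mem_left _ (hφ i))

/-- The substitution sending `X (i₀.succAbove t)` for `t < j` to `C (lam _) * X i₀`,
and fixing the other variables. -/
noncomputable def subst {n : ℕ} (i₀ : Fin (n + 1)) (lam : Fin (n + 1) → k) (j : ℕ)
    (i : Fin (n + 1)) : MvPolynomial (Fin (n + 1)) k :=
  if ∃ t : Fin n, i = i₀.succAbove t ∧ (t : ℕ) < j then C (lam i) * X i₀ else X i

/-- Substitution of a single variable. -/
noncomputable def subst1 {n : ℕ} (i₀ : Fin (n + 1)) (lam : Fin (n + 1) → k)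
    (s : Fin (n + 1)) (i : Fin (n + 1)) : MvPolynomial (Fin (n + 1)) k :=
  if i = s then C (lam i) * X i₀ else X i

variable {n : ℕ} (i₀ : Fin (n + 1)) (lam : Fin (n + 1) → k)

lemma subst_i₀ (j : ℕ) : subst i₀ lam j i₀ = X i₀ := by
  rw [subst, if_neg]
  rintro ⟨t, ht, -⟩
  exact (Fin.succAbove_ne i₀ t) ht.symm

lemma subst_succAbove (j : ℕ) (t : Fin n) :
    subst i₀ lam j (i₀.succAbove t)
      = if (t : ℕ) < j then C (lam (i₀.succAbove t)) * X i₀ else X (i₀.succAbove t) := by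
  rw [subst]
  by_cases h : (t : ℕ) < j
  · rw [if_pos ⟨t, rfl, h⟩, if_pos h]
  · rw [if_neg, if_neg h]
    rintro ⟨s, hs, hsj⟩
    have hst : t = s := Fin.succAbove_right_injective hs
    exact h (hst ▸ hsj)

lemma aeval_subst_succ (j : ℕ) (hj : j < n) (p : MvPolynomial (Fin (n + 1)) k) :
    MvPolynomial.aeval (subst i₀ lam (j + 1)) p
      = MvPolynomial.aeval (subst1 i₀ lam (i₀.succAbove ⟨j, hj⟩))
          (MvPolynomial.aeval (subst i₀ lam j) p) := by
  have hcomp : (MvPolynomial.aeval (subst1 i₀ lam (i₀.succAbove ⟨j, hj⟩))).comp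
        (MvPolynomial.aeval (subst i₀ lam j))
      = MvPolynomial.aeval (subst i₀ lam (j + 1)) := by
    rw [MvPolynomial.comp_aeval]
    congr 1
    funext i
    rcases eq_or_ne i i₀ with heq | hi
    · rw [heq, subst_i₀, subst_i₀, aeval_X, subst1, if_neg (Fin.ne_succAbove i₀ _)]
    · obtain ⟨t, rfl⟩ := Fin.exists_succAbove_eq hi
      rw [subst_succAbove, subst_succAbove]
      by_cases h1 : (t : ℕ) < j
      · rw [if_pos h1, if_pos (by omega), map_mul, aeval_C, aeval_X,
          MvPolynomial.algebraMap_eq, subst1, if_neg (Fin.ne_succAbove i₀ _)]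
      · rw [if_neg h1, aeval_X, subst1]
        by_cases h2 : i₀.succAbove t = i₀.succAbove ⟨j, hj⟩
        · have ht : t = ⟨j, hj⟩ := Fin.succAbove_right_injective h2
          rw [if_pos h2, if_pos (show (t : ℕ) < j + 1 by rw [ht]; exact Nat.lt_succ_self j), h2]
        · have ht : (t : ℕ) ≠ j := fun h => h2 (congrArg i₀.succAbove (Fin.ext h))
          rw [if_neg h2, if_neg (by omega)]
  rw [← hcomp]
  rfl

lemma height_ge (𝔭 : Ideal (MvPolynomial (Fin (n + 1)) k)) (h𝔭 : 𝔭.IsPrime)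
    (hlin : ∀ i, i ≠ i₀ → X i - C (lam i) * X i₀ ∈ 𝔭) :
    (n : ℕ∞) ≤ Order.height (⟨𝔭, h𝔭⟩ : PrimeSpectrum (MvPolynomial (Fin (n + 1)) k)) := by
  classical
  set Q : ℕ → Ideal (MvPolynomial (Fin (n + 1)) k) :=
    fun j => RingHom.ker (MvPolynomial.aeval (subst i₀ lam j)
      : MvPolynomial (Fin (n + 1)) k →ₐ[k] MvPolynomial (Fin (n + 1)) k) with hQ
  have hprime : ∀ j, (Q j).IsPrime := fun j => RingHom.ker_isPrime _
  -- the chain is strictly increasing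
  have hlt : ∀ (j : ℕ) (hj : j < n), Q j < Q (j + 1) := by
    intro j hj
    have hle : Q j ≤ Q (j + 1) := by
      intro p hp
      have hp0 : MvPolynomial.aeval (subst i₀ lam j) p = 0 := hp
      have : MvPolynomial.aeval (subst i₀ lam (j + 1)) p = 0 := by
        rw [aeval_subst_succ i₀ lam j hj, hp0, map_zero]
      exact this
    set g : MvPolynomial (Fin (n + 1)) k :=
      X (i₀.succAbove ⟨j, hj⟩) - C (lam (i₀.succAbove ⟨j, hj⟩)) * X i₀ with hg
    have hg1 : g ∈ Q (j + 1) := by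
      show MvPolynomial.aeval (subst i₀ lam (j + 1)) g = 0
      rw [hg, map_sub, map_mul, aeval_C, aeval_X, aeval_X, MvPolynomial.algebraMap_eq,
        subst_i₀, subst_succAbove, if_pos (Nat.lt_succ_self j), sub_self]
    have hg2 : g ∉ Q j := by
      intro hmem
      have hval : MvPolynomial.aeval (subst i₀ lam j) g = g := by
        rw [hg, map_sub, map_mul, aeval_C, aeval_X, aeval_X, MvPolynomial.algebraMap_eq,
          subst_i₀, subst_succAbove, if_neg (Nat.lt_irrefl j)]
      have hg0 : g = 0 := by rw [← hval]; exact hmem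
      have hcoeff := congrArg
        (MvPolynomial.coeff (Finsupp.single (i₀.succAbove ⟨j, hj⟩) 1)) hg0
      rw [hg] at hcoeff
      simp only [MvPolynomial.coeff_sub, MvPolynomial.coeff_C_mul, MvPolynomial.coeff_X,
        MvPolynomial.coeff_zero] at hcoeff
      simp only [ite_true] at hcoeff
      rw [if_neg (by
        intro h
        exact Fin.succAbove_ne i₀ ⟨j, hj⟩
          (by
            have := Finsupp.single_left_injective (α := Fin (n + 1)) (M := ℕ)
              one_ne_zero h
            exact this.symm))] at hcoeff
      simp at hcoeff
    exact lt_of_le_not_ge hle (fun h => hg2 (h hg1))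
  have hlast : Q n ≤ 𝔭 := by
    intro p hp
    have hsub : ∀ i, X i - subst i₀ lam n i ∈ 𝔭 := by
      intro i
      rcases eq_or_ne i i₀ with heq | hi
      · rw [heq, subst_i₀, sub_self]; exact 𝔭.zero_mem
      · obtain ⟨t, rfl⟩ := Fin.exists_succAbove_eq hi
        rw [subst_succAbove, if_pos t.isLt]
        exact hlin _ (Fin.succAbove_ne i₀ t)
    have h1 := sub_aeval_mem 𝔭 (subst i₀ lam n) hsub p
    have hp0 : MvPolynomial.aeval (subst i₀ lam n) p = 0 := hp
    rwa [hp0, sub_zero] at h1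
  -- build the LTSeries
  let P : LTSeries (PrimeSpectrum (MvPolynomial (Fin (n + 1)) k)) :=
    { length := n
      toFun := fun j => ⟨Q (j : ℕ), hprime _⟩
      step := fun j => by
        show (_ : PrimeSpectrum (MvPolynomial (Fin (n + 1)) k)) < _
        rw [← PrimeSpectrum.asIdeal_lt_asIdeal]
        show Q ((j.castSucc : Fin (n+1)) : ℕ) < Q ((j.succ : Fin (n+1)) : ℕ)
        rw [Fin.coe_castSucc, Fin.val_succ]
        exact hlt j j.isLt }
  have hlastle : P.last ≤ (⟨𝔭, h𝔭⟩ : PrimeSpectrum (MvPolynomial (Fin (n + 1)) k)) := by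
    rw [← PrimeSpectrum.asIdeal_le_asIdeal]
    show Q ((Fin.last n : Fin (n + 1)) : ℕ) ≤ 𝔭
    rw [Fin.val_last]
    exact hlast
  have := Order.length_le_height (p := P) hlastle
  simpa using this

end Stmt1Aux

open Stmt1Aux in
/-- Let `k` be a field of characteristic 0, `n ≥ 1`, and let `𝔭` be a prime
ideal of `k[x_0, …, x_n]` of height at most `n - 1`. Then for every `d ≥ 1`, the `k`-linear
subspace of homogeneous polynomials of degree `d` contained in `𝔭` has codimension at least 2
in the space of all homogeneous polynomials of degree `d`. -/
theorem stmt1 {k : Type*} [Field k] [CharZero k] (n : ℕ) (hn : 1 ≤ n)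
    (𝔭 : Ideal (MvPolynomial (Fin (n + 1)) k)) (h𝔭 : 𝔭.IsPrime)
    (hht : Order.height (⟨𝔭, h𝔭⟩ : PrimeSpectrum (MvPolynomial (Fin (n + 1)) k))
      ≤ ((n - 1 : ℕ) : ℕ∞))
    (d : ℕ) (hd : 1 ≤ d) :
    Module.finrank k ↥(MvPolynomial.homogeneousSubmodule (Fin (n + 1)) k d)
      - Module.finrank k
          ↥(MvPolynomial.homogeneousSubmodule (Fin (n + 1)) k d ⊓
            Submodule.restrictScalars k 𝔭) ≥ 2 := by
  classical
  by_contra hcon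
  push_neg at hcon
  set V := MvPolynomial.homogeneousSubmodule (Fin (n + 1)) k d with hV
  have hVle : V ≤ MvPolynomial.restrictTotalDegree (Fin (n + 1)) k d := by
    intro p hp
    rw [MvPolynomial.mem_restrictTotalDegree]
    exact ((MvPolynomial.mem_homogeneousSubmodule _ _).mp hp).totalDegree_le
  haveI : FiniteDimensional k ↥V := Submodule.finiteDimensional_of_le hVle
  -- key linear algebra fact
  have key : ∀ f g : MvPolynomial (Fin (n + 1)) k, f ∈ V → g ∈ V →
      ∃ a b : k, ¬(a = 0 ∧ b = 0) ∧ a • f + b • g ∈ 𝔭 := by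
    set W : Submodule k ↥V := Submodule.comap V.subtype (Submodule.restrictScalars k 𝔭)
      with hW
    have hWrank : Module.finrank k ↥W
        = Module.finrank k ↥(V ⊓ Submodule.restrictScalars k 𝔭) := by
      have h1 : W = Submodule.comap V.subtype (V ⊓ Submodule.restrictScalars k 𝔭) := by
        rw [Submodule.comap_inf, Submodule.comap_subtype_self, top_inf_eq]
      rw [h1]
      exact (Submodule.comapSubtypeEquivOfLe inf_le_left).finrank_eq
    have h2 := Submodule.finrank_quotient_add_finrank W
    have hq : Module.finrank k (↥V ⧸ W) ≤ 1 := by omega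
    intro f g hf hg
    have hnli : ¬ LinearIndependent k ![W.mkQ ⟨f, hf⟩, W.mkQ ⟨g, hg⟩] := by
      intro hli
      have hcard := hli.fintype_card_le_finrank
      rw [Fintype.card_fin] at hcard
      omega
    rw [LinearIndependent.pair_iff] at hnli
    push_neg at hnli
    obtain ⟨a, b, hab, hab0⟩ := hnli
    refine ⟨a, b, fun h => hab0 h.1 h.2, ?_⟩
    have hmemW : a • (⟨f, hf⟩ : ↥V) + b • (⟨g, hg⟩ : ↥V) ∈ W := by
      rw [← Submodule.Quotient.mk_eq_zero]
      rw [← Submodule.mkQ_apply, map_add, map_smul, map_smul]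
      exact hab
    have := hmemW
    rw [hW, Submodule.mem_comap] at this
    simpa using this
  -- find a pivot variable and linear relations
  have hC : ∃ i₀ : Fin (n + 1), ∀ i, i ≠ i₀ →
      ∃ c : k, X i - C c * X i₀ ∈ 𝔭 := by
    by_cases hall : ∀ i, (X i : MvPolynomial (Fin (n + 1)) k) ∈ 𝔭
    · exact ⟨0, fun i _ => ⟨0, by simpa using hall i⟩⟩
    · push_neg at hall
      obtain ⟨i₀, hi₀⟩ := hall
      refine ⟨i₀, fun i hi => ?_⟩
      obtain ⟨e, rfl⟩ : ∃ e, d = e + 1 := ⟨d - 1, by omega⟩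
      have hf : (X i * X i₀ ^ e : MvPolynomial (Fin (n + 1)) k) ∈ V := by
        rw [hV, MvPolynomial.mem_homogeneousSubmodule]
        have := (MvPolynomial.isHomogeneous_X k i).mul
          ((MvPolynomial.isHomogeneous_X k i₀).pow e)
        simpa [add_comm] using this
      have hg : (X i₀ ^ (e + 1) : MvPolynomial (Fin (n + 1)) k) ∈ V := by
        rw [hV, MvPolynomial.mem_homogeneousSubmodule]
        have := (MvPolynomial.isHomogeneous_X k i₀).pow (e + 1)
        simpa using this
      obtain ⟨a, b, hab, hmem⟩ := key _ _ hf hg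
      by_cases ha : a = 0
      · have hb : b ≠ 0 := fun hb => hab ⟨ha, hb⟩
        exfalso
        apply hi₀
        have hpow : (X i₀ ^ (e + 1) : MvPolynomial (Fin (n + 1)) k) ∈ 𝔭 := by
          rw [ha, zero_smul, zero_add, MvPolynomial.smul_eq_C_mul] at hmem
          have h2 := 𝔭.mul_mem_left (C b⁻¹) hmem
          rwa [← mul_assoc, ← MvPolynomial.C_mul, inv_mul_cancel₀ hb, MvPolynomial.C_1,
            one_mul] at h2
        exact h𝔭.mem_of_pow_mem _ hpow
      · have hid : C a⁻¹ * (a • (X i * X i₀ ^ e) + b • X i₀ ^ (e + 1)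
              : MvPolynomial (Fin (n + 1)) k)
            = X i₀ ^ e * (X i + C (a⁻¹ * b) * X i₀) := by
          rw [MvPolynomial.smul_eq_C_mul, MvPolynomial.smul_eq_C_mul, MvPolynomial.C_mul,
            mul_add, ← mul_assoc, ← MvPolynomial.C_mul, inv_mul_cancel₀ ha,
            MvPolynomial.C_1, one_mul]
          ring
        have h3 : (X i₀ ^ e : MvPolynomial (Fin (n + 1)) k)
            * (X i + C (a⁻¹ * b) * X i₀) ∈ 𝔭 :=
          hid ▸ 𝔭.mul_mem_left (C a⁻¹) hmem
        rcases h𝔭.mem_or_mem h3 with h4 | h4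
        · exact absurd (h𝔭.mem_of_pow_mem _ h4) hi₀
        · refine ⟨-(a⁻¹ * b), ?_⟩
          rwa [map_neg, neg_mul, sub_neg_eq_add]
  obtain ⟨i₀, hlam⟩ := hC
  have h5 : ∀ i : Fin (n + 1), ∃ c : k, i ≠ i₀ → X i - C c * X i₀ ∈ 𝔭 := by
    intro i
    by_cases h : i = i₀
    · exact ⟨0, fun h' => absurd h h'⟩
    · obtain ⟨c, hc⟩ := hlam i h
      exact ⟨c, fun _ => hc⟩
  choose lam hlam2 using h5
  have hge := height_ge i₀ lam 𝔭 h𝔭 (fun i hi => hlam2 i hi)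
  have hle := le_trans hge hht
  have : n ≤ n - 1 := by exact_mod_cast hle
  omega
end

section
/- Let K be a finite field of odd cardinality and let L be a field extension of K of finite degree b. Then for any K-basis B of L, the discriminant disc(B) = det(Tr_{L/K}(e_i·e_j))_{i,j} (where B = (e_1, …, e_b)) is a square in K if and only if b is odd. -/
/-- Let `K` be a finite field of odd cardinality and `L` a field extension of
`K` of finite degree `b`. Then for any `K`-basis `B = (e_1, …, e_b)` of `L`, the discriminant
`det (Tr_{L/K}(e_i·e_j))_{i,j}` is a square in `K` if and only if `b` is odd. -/
theorem stmt9 {K L : Type*} [Field K] [Fintype K] (hodd : Odd (Fintype.card K))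
    [Field L] [Algebra K L] (b : ℕ) (B : Module.Basis (Fin b) K L) :
    IsSquare (Matrix.det (Matrix.of fun i j : Fin b => Algebra.trace K L (B i * B j))) ↔
      Odd b := by
  classical
  haveI : FiniteDimensional K L := Module.Finite.of_basis B
  letI : Fintype L := Module.fintypeOfFintype B
  set q := Fintype.card K with hq
  have hq1 : 1 < q := Fintype.one_lt_card
  have hb : Module.finrank K L = b := by
    rw [Module.finrank_eq_card_basis B, Fintype.card_fin]
  have hb0 : b ≠ 0 := by
    intro h
    have := Module.finrank_pos (R := K) (M := L)
    omega
  obtain ⟨m, rfl⟩ : ∃ m, b = m + 1 := ⟨b - 1, by omega⟩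
  -- characteristic
  set p := ringChar K with hp
  haveI : CharP K p := ringChar.charP K
  have hpprime : p.Prime := CharP.char_is_prime K p
  haveI : Fact p.Prime := ⟨hpprime⟩
  have hinj : Function.Injective (algebraMap K L) := (algebraMap K L).injective
  haveI : CharP L p := charP_of_injective_algebraMap hinj p
  have hp2 : p ≠ 2 := by
    intro h2
    obtain ⟨n, -, hcard⟩ := FiniteField.card K p
    have : 2 ∣ q := by
      rw [hq, hcard, h2]
      exact dvd_pow_self 2 n.ne_zero
    rw [Nat.odd_iff] at hodd
    omega
  have hneg : (-1 : L) ≠ 1 := by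
    intro h
    have h2 : ((2 : ℕ) : L) = 0 := by
      push_cast
      linear_combination -h
    have hdvd := (CharP.cast_eq_zero_iff L p 2).mp h2
    exact hp2 ((Nat.prime_dvd_prime_iff_eq hpprime Nat.prime_two).mp hdvd)
  -- Frobenius
  have hq0 : q ≠ 0 := by omega
  obtain ⟨n, -, hcard⟩ := FiniteField.card K p
  let φ : L →ₐ[K] L :=
    { toFun := fun x => x ^ q
      map_one' := one_pow q
      map_mul' := fun x y => mul_pow x y q
      map_zero' := zero_pow hq0
      map_add' := fun x y => by rw [hq, hcard]; exact add_pow_char_pow x y p n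
      commutes' := fun x => by
        show algebraMap K L x ^ q = algebraMap K L x
        rw [← map_pow, hq, FiniteField.pow_card] }
  have hbij : Function.Bijective φ :=
    (Finite.injective_iff_bijective).mp (φ.toRingHom.injective)
  let h : L ≃ₐ[K] L := AlgEquiv.ofBijective φ hbij
  have hh : ∀ x : L, h x = x ^ q := fun x => rfl
  have hpow : ∀ (i : ℕ) (x : L), (h ^ i) x = x ^ q ^ i := by
    intro i
    induction i with
    | zero => intro x; simp
    | succ n ih =>
      intro x
      rw [pow_succ, AlgEquiv.mul_apply, hh, ih, ← pow_mul]
      congr 1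
      ring
  have hcardL : Fintype.card L = q ^ (m + 1) := by
    rw [← hb, hq]; exact Module.card_eq_pow_finrank (K := K) (V := L)
  have hb1 : h ^ (m + 1) = 1 := by
    ext x
    rw [hpow, ← hcardL, FiniteField.pow_card]
    rfl
  have horder : orderOf h = m + 1 := by
    have hdvd : orderOf h ∣ m + 1 := orderOf_dvd_of_pow_eq_one hb1
    have hle : m + 1 ≤ orderOf h := by
      by_contra hlt
      push_neg at hlt
      set d := orderOf h with hd
      have hd0 : 0 < d := orderOf_pos h
      have hall : ∀ x : L, x ^ q ^ d = x := by
        intro x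
        have := pow_orderOf_eq_one h
        rw [← hd] at this
        have := congrArg (fun (f : L ≃ₐ[K] L) => f x) this
        simpa [hpow] using this
      have hdeg : (Polynomial.X ^ q ^ d - Polynomial.X : Polynomial L).natDegree = q ^ d :=
        FiniteField.X_pow_card_sub_X_natDegree_eq L (Nat.one_lt_pow hd0.ne' hq1)
      have hP0 : (Polynomial.X ^ q ^ d - Polynomial.X : Polynomial L) ≠ 0 :=
        FiniteField.X_pow_card_sub_X_ne_zero L (Nat.one_lt_pow hd0.ne' hq1)
      have hsub : Finset.univ ⊆ (Polynomial.X ^ q ^ d - Polynomial.X :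
          Polynomial L).roots.toFinset := by
        intro x _
        rw [Multiset.mem_toFinset, Polynomial.mem_roots hP0]
        simp [Polynomial.IsRoot, hall x]
      have hcount : Fintype.card L ≤ q ^ d := by
        calc Fintype.card L = Finset.univ.card := rfl
          _ ≤ _ := Finset.card_le_card hsub
          _ ≤ (Polynomial.X ^ q ^ d - Polynomial.X : Polynomial L).roots.card :=
              Multiset.toFinset_card_le _
          _ ≤ _ := (Polynomial.card_roots' _)
          _ = q ^ d := hdeg
      rw [hcardL] at hcount
      have := (Nat.pow_le_pow_iff_right hq1).mp hcount
      omega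
    exact le_antisymm (Nat.le_of_dvd (by omega) hdvd) hle
  -- enumeration of the Galois group by powers of Frobenius
  have hcardG : Fintype.card (L ≃ₐ[K] L) = m + 1 := by
    rw [← Nat.card_eq_fintype_card, IsGalois.card_aut_eq_finrank, hb]
  have hfinj : Function.Injective (fun i : Fin (m + 1) => h ^ (i : ℕ)) := by
    intro i j hij
    have := pow_injOn_Iio_orderOf (x := h) (by rw [horder]; exact i.isLt)
      (by rw [horder]; exact j.isLt) hij
    exact Fin.ext this
  let e : Fin (m + 1) ≃ (L ≃ₐ[K] L) :=
    Equiv.ofBijective _ ((Fintype.bijective_iff_injective_and_card _).mpr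
      ⟨hfinj, by rw [Fintype.card_fin, hcardG]⟩)
  have he : ∀ i : Fin (m + 1), e i = h ^ (i : ℕ) := fun i => rfl
  -- the embeddings matrix
  let M : Matrix (Fin (m + 1)) (Fin (m + 1)) L := Matrix.of fun i j => (e i) (B j)
  set T : Matrix (Fin (m + 1)) (Fin (m + 1)) K :=
    Matrix.of fun i j : Fin (m + 1) => Algebra.trace K L (B i * B j) with hT
  have hTM : T.map (algebraMap K L) = M.transpose * M := by
    ext i j
    rw [Matrix.map_apply, Matrix.mul_apply]
    have : ∀ k : Fin (m + 1), M.transpose i k * M k j = (e k) (B i * B j) := by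
      intro k
      simp [M, Matrix.transpose_apply, map_mul]
    simp_rw [this]
    rw [show T i j = Algebra.trace K L (B i * B j) from rfl, trace_eq_sum_automorphisms]
    exact (Equiv.sum_comp e (fun σ : L ≃ₐ[K] L => σ (B i * B j))).symm
  have hdet : algebraMap K L T.det = M.det ^ 2 := by
    rw [RingHom.map_det]
    have : (algebraMap K L).mapMatrix T = M.transpose * M := hTM
    rw [this, Matrix.det_mul, Matrix.det_transpose, sq]
  -- discriminant nonzero
  have hT0 : T.det ≠ 0 := by
    have h1 : Algebra.traceMatrix K ⇑B = T := by
      ext i j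
      simp [Algebra.traceMatrix_apply, Algebra.traceForm_apply, hT]
    have h2 := Algebra.discr_not_zero_of_basis K B
    rwa [Algebra.discr_def, h1] at h2
  have hD0 : M.det ≠ 0 := by
    intro h0
    apply hT0
    apply hinj
    rw [hdet, h0, map_zero]
    ring
  -- Frobenius permutes the rows of M cyclically
  have hcyc : ∀ i : Fin (m + 1), e (finRotate (m + 1) i) = h * e i := by
    intro i
    rw [finRotate_succ_apply, he, he, ← pow_succ']
    apply pow_eq_pow_iff_modEq.mpr
    rw [horder]
    have hval : ((i + 1 : Fin (m + 1)) : ℕ) = ((i : ℕ) + (1 : Fin (m + 1)).val) % (m + 1) := by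
      rw [Fin.add_def]
    rw [hval]
    calc ((i : ℕ) + (1 : Fin (m + 1)).val) % (m + 1)
        ≡ (i : ℕ) + (1 : Fin (m + 1)).val [MOD m + 1] := Nat.mod_modEq _ _
      _ ≡ (i : ℕ) + 1 [MOD m + 1] := by
          apply Nat.ModEq.add_left
          rw [Fin.val_one']
          exact Nat.mod_modEq 1 (m + 1)
  have hMrow : M.map (fun x => h x) = M.submatrix (finRotate (m + 1)) id := by
    ext i j
    simp only [Matrix.map_apply, Matrix.submatrix_apply, id]
    rw [show M (finRotate (m + 1) i) j = (e (finRotate (m + 1) i)) (B j) from rfl, hcyc,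
      AlgEquiv.mul_apply]
    rfl
  have hsign : h M.det = ((-1 : L) ^ m) * M.det := by
    have h1 : h M.det = (M.map (fun x => h x)).det := by
      have h2 := RingHom.map_det (RingHomClass.toRingHom h) M
      simpa using h2
    rw [h1, hMrow, Matrix.det_permute, sign_finRotate]
    push_cast
    ring
  -- conclusion
  have hchar2 : ringChar K ≠ 2 := by rw [← hp]; exact hp2
  have hiff := FiniteField.isSquare_iff hchar2 hT0
  have key : algebraMap K L (T.det ^ (q / 2)) = (-1 : L) ^ m := by
    rw [map_pow, hdet, ← pow_mul]
    have hq2 : 2 * (q / 2) = q - 1 := by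
      obtain ⟨k, hk⟩ := hodd
      omega
    rw [hq2]
    have hstep : M.det ^ (q - 1) * M.det = ((-1 : L) ^ m) * M.det := by
      rw [← pow_succ]
      have : q - 1 + 1 = q := by omega
      rw [this, ← hh, hsign]
    exact mul_right_cancel₀ hD0 hstep
  have h2 : T.det ^ (q / 2) = 1 ↔ ((-1 : L) ^ m = 1) :=
    ⟨fun h1 => by rw [← key, h1, map_one],
     fun h1 => hinj (by rw [key, map_one]; exact h1)⟩
  rw [hiff, h2, neg_one_pow_eq_one_iff_even hneg]
  rw [Nat.odd_add_one, Nat.not_odd_iff_even]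
end

section
/- Let K be a finite field of odd cardinality, let L be a field extension of K of finite degree b, let B = (e_1, …, e_b) be a K-basis of L, and let J ∈ L be nonzero. Then the determinant of the b×b matrix whose (i,j) entry is Tr_{L/K}(J·e_i·e_j) is a square in K if and only if (J is a square in L ⟺ b is odd). -/
open Matrix Finset

private lemma geom_sum_mul_nat (q b : ℕ) (hq : 1 ≤ q) :
    (∑ i ∈ Finset.range b, q ^ i) * (q - 1) = q ^ b - 1 := by
  induction b with
  | zero => simp
  | succ b ih =>
    rw [Finset.sum_range_succ, add_mul, ih, pow_succ]
    have h1 : 1 ≤ q ^ b := Nat.one_le_pow _ _ hq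
    have h2 : q ^ b ≤ q ^ b * q := Nat.le_mul_of_pos_right _ hq
    zify [hq, h1, h2, le_trans h1 h2]
    ring

/-- Let `K` be a finite field of odd cardinality, `L` a field extension of
`K` of finite degree `b`, `B = (e_1, …, e_b)` a `K`-basis of `L`, and `J ∈ L` nonzero. Then
`det (Tr_{L/K}(J·e_i·e_j))_{i,j}` is a square in `K` if and only if
(`J` is a square in `L` ⟺ `b` is odd). -/
theorem stmt11 {K L : Type*} [Field K] [Fintype K] (hodd : Odd (Fintype.card K))
    [Field L] [Algebra K L] (b : ℕ) (B : Module.Basis (Fin b) K L) (J : L) (hJ : J ≠ 0) :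
    IsSquare (Matrix.det (Matrix.of fun i j : Fin b => Algebra.trace K L (J * B i * B j))) ↔
      (IsSquare J ↔ Odd b) := by
  classical
  haveI : FiniteDimensional K L := Module.Finite.of_basis B
  haveI : Finite L := Module.finite_of_finite K
  letI : Fintype L := Fintype.ofFinite L
  set q := Fintype.card K with hqdef
  have hq2 : 2 ≤ q := Fintype.one_lt_card
  have hq1 : 1 ≤ q := le_trans (by norm_num) hq2
  have hb : 0 < b := Fin.pos_iff_nonempty.mpr B.index_nonempty
  have hqodd : q % 2 = 1 := Nat.odd_iff.mp hodd
  have hK2 : ringChar K ≠ 2 := by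
    intro h
    have := FiniteField.even_card_iff_char_two.mp h
    omega
  have hcardL : Fintype.card L = q ^ b := by
    rw [Module.card_fintype B, Fintype.card_fin]
  have hLodd : Fintype.card L % 2 = 1 := by
    rw [hcardL]; exact Nat.odd_iff.mp hodd.pow
  have hL2 : ringChar L ≠ 2 := by
    intro h
    have := FiniteField.even_card_iff_char_two.mp h
    omega
  -- Frobenius
  set p := ringChar K with hpdef
  haveI hpK : CharP K p := ringChar.charP K
  obtain ⟨n, hp, hcard⟩ := FiniteField.card K p
  haveI : Fact p.Prime := ⟨hp⟩
  haveI : CharP L p := charP_of_injective_algebraMap (algebraMap K L).injective p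
  let φ : L →ₐ[K] L :=
    { iterateFrobenius L p (n : ℕ) with
      commutes' := fun x => by
        simp only [RingHom.toMonoidHom_eq_coe, OneHom.toFun_eq_coe, MonoidHom.toOneHom_coe,
          MonoidHom.coe_coe]
        rw [iterateFrobenius_def, ← map_pow, ← hcard, ← hqdef, FiniteField.pow_card] }
  have hφ : ∀ x : L, φ x = x ^ q := fun x => by
    have : φ x = iterateFrobenius L p (n : ℕ) x := rfl
    rw [this, iterateFrobenius_def, hqdef, hcard]
  let σ : L ≃ₐ[K] L := AlgEquiv.ofBijective φ φ.bijective
  have hσ : ∀ x : L, σ x = x ^ q := hφ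
  have hg : ∀ (i : ℕ) (x : L), (σ ^ i) x = x ^ q ^ i := by
    intro i
    induction i with
    | zero => intro x; simp
    | succ i ih =>
      intro x
      rw [pow_succ, AlgEquiv.mul_apply, hσ, ih, ← pow_mul, pow_succ']
  have hσb : σ ^ b = 1 := by
    ext x
    rw [hg, ← hcardL, FiniteField.pow_card, AlgEquiv.one_apply]
  have hmod : ∀ m : ℕ, σ ^ (m % b) = σ ^ m := by
    intro m
    conv_rhs => rw [← Nat.mod_add_div m b, pow_add, pow_mul, hσb, one_pow, mul_one]
  -- injectivity of powers of Frobenius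
  have hinj : Function.Injective (fun i : Fin b => σ ^ (i : ℕ)) := by
    have key : ∀ i j : ℕ, i < j → j < b → σ ^ i ≠ σ ^ j := by
      intro i j hij hjb h
      obtain ⟨ζ, hζ⟩ := IsCyclic.exists_generator (α := Lˣ)
      have horder : orderOf ζ = q ^ b - 1 := by
        rw [orderOf_eq_card_of_forall_mem_zpowers hζ, Nat.card_eq_fintype_card, Fintype.card_units, hcardL]
      have hz : (ζ : L) ^ q ^ i = (ζ : L) ^ q ^ j := by
        rw [← hg i, ← hg j, h]
      have hz' : ζ ^ q ^ i = ζ ^ q ^ j := Units.ext (by push_cast; exact hz)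
      have hmodeq : q ^ i ≡ q ^ j [MOD orderOf ζ] := pow_eq_pow_iff_modEq.mp hz'
      have hle : q ^ i ≤ q ^ j := Nat.pow_le_pow_right (by omega) hij.le
      have hdvd : orderOf ζ ∣ q ^ j - q ^ i := (Nat.modEq_iff_dvd' hle).mp hmodeq
      have hlt : q ^ i < q ^ j := Nat.pow_lt_pow_right (by omega) hij
      have hjlt : q ^ j < q ^ b := Nat.pow_lt_pow_right (by omega) hjb
      have hpos : 0 < q ^ j - q ^ i := by omega
      have hle2 : orderOf ζ ≤ q ^ j - q ^ i := Nat.le_of_dvd hpos hdvd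
      rw [horder] at hle2
      have h1 : 1 ≤ q ^ i := Nat.one_le_pow _ _ hq1
      have h4 : 1 ≤ q ^ j := Nat.one_le_pow _ _ hq1
      exact absurd (hle2.trans (Nat.sub_le_sub_left h1 _))
        (not_le.mpr (Nat.sub_lt_sub_right h4 hjlt))
    intro i j hij
    rcases lt_trichotomy i j with h | h | h
    · exact absurd hij (key i j (Fin.lt_iff_val_lt_val.mp h) j.isLt)
    · exact h
    · exact absurd hij.symm (key j i (Fin.lt_iff_val_lt_val.mp h) i.isLt)
  have hcardaut : Fintype.card (L ≃ₐ[K] L) = b := by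
    rw [← Nat.card_eq_fintype_card, IsGalois.card_aut_eq_finrank, Module.finrank_eq_card_basis B, Fintype.card_fin]
  let e : Fin b ≃ (L ≃ₐ[K] L) :=
    Equiv.ofBijective (fun i : Fin b => σ ^ (i : ℕ))
      ((Fintype.bijective_iff_injective_and_card _).mpr
        ⟨hinj, by rw [Fintype.card_fin, hcardaut]⟩)
  -- the embeddings matrix
  set A : Matrix (Fin b) (Fin b) L := Matrix.of fun i k : Fin b => (σ ^ (k : ℕ)) (B i) with hA
  have hkey : ∀ x : L,
      (Matrix.of fun i j : Fin b => Algebra.trace K L (x * B i * B j)).map (algebraMap K L)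
        = A * (Matrix.diagonal fun k : Fin b => (σ ^ (k : ℕ)) x) * Aᵀ := by
    intro x
    ext i j
    rw [Matrix.map_apply, Matrix.of_apply, trace_eq_sum_automorphisms,
      ← Equiv.sum_comp e (fun τ : L ≃ₐ[K] L => τ (x * B i * B j)), Matrix.mul_apply]
    refine Finset.sum_congr rfl fun k _ => ?_
    rw [Matrix.mul_diagonal]
    simp only [Matrix.transpose_apply, hA, Matrix.of_apply]
    show (σ ^ (k : ℕ)) (x * B i * B j) = _
    rw [_root_.map_mul, _root_.map_mul]
    ring
  have hdet : ∀ x : L,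
      algebraMap K L (Matrix.det (Matrix.of fun i j : Fin b => Algebra.trace K L (x * B i * B j)))
        = A.det ^ 2 * ∏ k : Fin b, (σ ^ (k : ℕ)) x := by
    intro x
    rw [RingHom.map_det, RingHom.mapMatrix_apply, hkey x, Matrix.det_mul, Matrix.det_mul, Matrix.det_transpose,
      Matrix.det_diagonal]
    ring
  set δ := A.det with hδdef
  have hδ : δ ≠ 0 := by
    intro h
    have h1 := hdet 1
    have htm : (Matrix.of fun i j : Fin b => Algebra.trace K L (1 * B i * B j))
        = Algebra.traceMatrix K B := by
      ext i j
      simp [Algebra.traceMatrix_apply, Algebra.traceForm_apply]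
    rw [htm, ← Algebra.discr_def, h] at h1
    simp only [_root_.map_one, Finset.prod_const_one, mul_one, ne_eq, zero_pow] at h1
    exact Algebra.discr_not_zero_of_basis K B
      ((map_eq_zero_iff _ (algebraMap K L).injective).mp (by rw [h1]; norm_num))
  -- Frobenius action on δ
  obtain ⟨m, rfl⟩ : ∃ m, b = m + 1 := ⟨b - 1, (Nat.succ_pred_eq_of_pos hb).symm⟩
  have hfrob : σ δ = (-1 : L) ^ m * δ := by
    have hmap : A.map ⇑(σ : L ≃+* L).toRingHom = A.submatrix id (finRotate (m + 1)) := by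
      ext i k
      simp only [Matrix.map_apply, Matrix.submatrix_apply, id_eq, hA, Matrix.of_apply,
        finRotate_succ_apply]
      have h1 : σ ((σ ^ (k : ℕ)) (B i)) = (σ ^ ((k : ℕ) + 1)) (B i) := by
        rw [pow_succ', AlgEquiv.mul_apply]
      show σ ((σ ^ (k : ℕ)) (B i)) = _
      rw [h1]
      congr 1
      have hval : ((k + 1 : Fin (m + 1)) : ℕ) = ((k : ℕ) + 1) % (m + 1) := by
        rw [Fin.val_add, Fin.val_one', Nat.add_mod_mod]
      rw [hval, hmod]
    have h2 := (σ : L ≃+* L).toRingHom.map_det A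
    rw [RingHom.mapMatrix_apply, hmap, Matrix.det_permute', sign_finRotate] at h2
    rw [show σ δ = (σ : L ≃+* L).toRingHom δ from rfl, hδdef, h2]
    push_cast
    ring
  have hδq : δ ^ (q - 1) = (-1 : L) ^ m := by
    have h1 : δ ^ q = (-1 : L) ^ m * δ := by rw [← hσ δ, hfrob]
    have h2 : δ ^ (q - 1) * δ = δ ^ q := by
      rw [← pow_succ, Nat.sub_add_cancel hq1]
    exact mul_right_cancel₀ hδ (by rw [h2, h1])
  -- the product over Frobenius powers
  set s := ∑ i ∈ Finset.range (m + 1), q ^ i with hs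
  have hprod : (∏ k : Fin (m + 1), (σ ^ (k : ℕ)) J) = J ^ s := by
    rw [hs, ← Fin.sum_univ_eq_sum_range, ← Finset.prod_pow_eq_pow_sum]
    exact Finset.prod_congr rfl fun k _ => hg _ _
  set T := Matrix.det (Matrix.of fun i j : Fin (m + 1) => Algebra.trace K L (J * B i * B j))
    with hT
  have hTval : algebraMap K L T = δ ^ 2 * J ^ s := by
    rw [hT, hdet J, hprod]
  have hTne : T ≠ 0 := by
    intro h
    rw [h, map_zero] at hTval
    exact mul_ne_zero (pow_ne_zero 2 hδ) (pow_ne_zero s hJ) hTval.symm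
  -- numerics
  set c := q / 2 with hc
  have h2c : 2 * c = q - 1 := by omega
  set cL := Fintype.card L / 2 with hcL
  have h2cL : 2 * cL = q ^ (m + 1) - 1 := by omega
  have hsgeom : s * (q - 1) = q ^ (m + 1) - 1 := geom_sum_mul_nat q (m + 1) hq1
  have hsc : s * c = cL := by
    have h3 : 2 * (s * c) = 2 * cL := by
      rw [h2cL, ← hsgeom, ← h2c]; ring
    omega
  -- main computation
  have hTc : T ^ c = 1 ↔ (-1 : L) ^ m * J ^ cL = 1 := by
    rw [← (algebraMap K L).injective.eq_iff, map_pow, _root_.map_one, hTval, mul_pow, ← pow_mul,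
      ← pow_mul, h2c, hsc, hδq]
  have hu2 : (J ^ cL) ^ 2 = 1 := by
    rw [← pow_mul, mul_comm cL 2, h2cL, ← hcardL]
    exact FiniteField.pow_card_sub_one_eq_one J hJ
  have hu : J ^ cL = 1 ∨ J ^ cL = -1 := by
    have h0 : (J ^ cL - 1) * (J ^ cL + 1) = 0 := by linear_combination hu2
    rcases mul_eq_zero.mp h0 with h | h
    · exact Or.inl (sub_eq_zero.mp h)
    · exact Or.inr (eq_neg_of_add_eq_zero_left h)
  have hv : (-1 : L) ^ m = 1 ∨ (-1 : L) ^ m = -1 :=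
    (Nat.even_or_odd m).imp (fun h => h.neg_one_pow) (fun h => h.neg_one_pow)
  have hne : (-1 : L) ≠ 1 := Ring.neg_one_ne_one_of_char_ne_two hL2
  have hvodd : ((-1 : L) ^ m = 1) ↔ Odd (m + 1) := by
    rw [neg_one_pow_eq_one_iff_even hne, Nat.even_iff, Nat.odd_iff]
    omega
  rw [FiniteField.isSquare_iff hK2 hTne, ← hqdef, ← hc, hTc,
    FiniteField.isSquare_iff hL2 hJ, ← hcL, ← hvodd]
  rcases hv with h | h <;> rcases hu with h' | h' <;> rw [h, h'] <;> simp [hne]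
end

section
/- Let K be a field and let m ≥ 1 be an integer not divisible by the characteristic of K such that K contains a primitive m-th root of unity. Let a ∈ K be such that the polynomial X^m − a is irreducible over K, let L = K[X]/(X^m − a), and let θ ∈ L be the image of X. Then the discriminant of the power basis (1, θ, θ², …, θ^{m−1}) of L over K, i.e., the determinant of the m×m matrix whose (i,j) entry is Tr_{L/K}(θ^{i+j−2}) for 1 ≤ i, j ≤ m, equals (−1)^{(m−1)(m−2)/2} · m^m · a^{m−1}. -/
open Polynomial

private theorem gauss_aux (m : ℕ) (hm : 1 ≤ m) :
    m * (m - 1) / 2 = (m - 1) * (m - 2) / 2 + (m - 1) := by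
  obtain ⟨k, rfl⟩ : ∃ k, m = k + 1 := ⟨m - 1, by omega⟩
  have h1 := Finset.sum_range_id (k + 1)
  have h2 := Finset.sum_range_id k
  rw [Finset.sum_range_succ] at h1
  simp only [Nat.add_sub_cancel, show k + 1 - 2 = k - 1 by omega] at *
  omega

private theorem sign_aux {K : Type*} [Field K] (m : ℕ) (hm : 1 ≤ m) :
    (-1 : K) ^ (m * (m - 1) / 2) * ((-1 : K) ^ (m + 1)) ^ (m - 1) =
      (-1 : K) ^ ((m - 1) * (m - 2) / 2) := by
  have hev : Even ((m - 1) + (m + 1) * (m - 1)) := by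
    have heq : (m - 1) + (m + 1) * (m - 1) = (m - 1) * (m + 2) := by
      obtain ⟨k, rfl⟩ : ∃ k, m = k + 1 := ⟨m - 1, by omega⟩
      simp only [Nat.add_sub_cancel]
      ring
    rw [heq]
    rcases Nat.even_or_odd m with h | h
    · exact (h.add even_two).mul_left _
    · exact (Nat.Odd.sub_odd h odd_one).mul_right _
  rw [gauss_aux m hm, pow_add, ← pow_mul, mul_assoc, ← pow_add, hev.neg_one_pow, mul_one]




/-- Let `K` be a field and `m ≥ 1` an integer not divisible by the
characteristic of `K` such that `K` contains a primitive `m`-th root of unity. Let `a ∈ K` be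
such that `X^m − a` is irreducible over `K`, let `L = K[X]/(X^m − a)` and `θ` the image of `X`.
Then the discriminant of the power basis `(1, θ, …, θ^{m−1})`, i.e. the determinant of the
`m×m` matrix with `(i,j)` entry `Tr_{L/K}(θ^{i+j−2})` (for `1 ≤ i, j ≤ m`), equals
`(−1)^{(m−1)(m−2)/2} · m^m · a^{m−1}`. -/
theorem stmt13 {K : Type*} [Field K] (m : ℕ) (hm : 1 ≤ m) (hchar : ¬ (ringChar K ∣ m))
    (hroot : ∃ ζ : K, IsPrimitiveRoot ζ m) (a : K)
    (hirr : Irreducible (Polynomial.X ^ m - Polynomial.C a : Polynomial K)) :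
    Matrix.det (Matrix.of fun i j : Fin m =>
        Algebra.trace K (AdjoinRoot (Polynomial.X ^ m - Polynomial.C a : Polynomial K))
          ((AdjoinRoot.root (Polynomial.X ^ m - Polynomial.C a : Polynomial K))
            ^ ((i : ℕ) + (j : ℕ)))) =
      (-1 : K) ^ ((m - 1) * (m - 2) / 2) * (m : K) ^ m * a ^ (m - 1) := by
  classical
  have hm0 : m ≠ 0 := by omega
  set f : K[X] := X ^ m - C a with hfdef
  haveI := Fact.mk hirr
  have hfm : f.Monic := monic_X_pow_sub_C a hm0
  have hf0 : f ≠ 0 := hfm.ne_zero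
  obtain ⟨ζ, hζ⟩ := hroot
  have hζ' : (primitiveRoots m K).Nonempty :=
    ⟨ζ, (mem_primitiveRoots (Nat.pos_of_ne_zero hm0)).mpr hζ⟩
  haveI : IsSplittingField K (AdjoinRoot f) f :=
    isSplittingField_AdjoinRoot_X_pow_sub_C hζ' hirr
  haveI : IsGalois K (AdjoinRoot f) :=
    isGalois_of_isSplittingField_X_pow_sub_C hζ' hirr _
  set pb := AdjoinRoot.powerBasis hf0 with hpb
  haveI : Module.Finite K (AdjoinRoot f) := pb.finite
  have hdim : pb.dim = m := by
    simp [hpb, AdjoinRoot.powerBasis_dim, hfdef, natDegree_X_pow_sub_C]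
  have hrank : Module.finrank K (AdjoinRoot f) = m :=
    finrank_of_isSplittingField_X_pow_sub_C hζ' hirr _
  have hmin : minpoly K pb.gen = f := AdjoinRoot.minpoly_powerBasis_gen_of_monic hfm
  -- identify the matrix with the trace matrix of the power basis
  have hmat : Matrix.det (Matrix.of fun i j : Fin m =>
        Algebra.trace K (AdjoinRoot f) ((AdjoinRoot.root f) ^ ((i : ℕ) + (j : ℕ)))) =
      Algebra.discr K pb.basis := by
    rw [Algebra.discr_def, ← Matrix.det_submatrix_equiv_self (finCongr hdim.symm)]
    congr 1
    ext i j
    simp [Algebra.traceMatrix_apply, Algebra.traceForm_apply, PowerBasis.coe_basis,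
      pow_add, hpb, AdjoinRoot.powerBasis_gen]
  rw [hmat, Algebra.discr_powerBasis_eq_norm, hmin]
  -- compute the derivative term
  have hderiv : derivative f = C (m : K) * X ^ (m - 1) := by
    simp [hfdef, derivative_X_pow]
  have hev : (aeval pb.gen) (derivative f) =
      algebraMap K (AdjoinRoot f) (m : K) * pb.gen ^ (m - 1) := by
    rw [hderiv]; simp
  rw [hev, map_mul, Algebra.norm_algebraMap, map_pow, hrank]
  have hnormgen : Algebra.norm K pb.gen = (-1 : K) ^ (m + 1) * a := by
    rw [Algebra.PowerBasis.norm_gen_eq_coeff_zero_minpoly, hmin, hdim]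
    simp [hfdef, coeff_X_pow, Ne.symm hm0, pow_succ]
  rw [hnormgen, mul_pow]
  calc (-1 : K) ^ (m * (m - 1) / 2) * ((m : K) ^ m * (((-1 : K) ^ (m + 1)) ^ (m - 1) * a ^ (m - 1)))
      = ((-1 : K) ^ (m * (m - 1) / 2) * ((-1 : K) ^ (m + 1)) ^ (m - 1)) * (m : K) ^ m * a ^ (m - 1) := by ring
    _ = (-1 : K) ^ ((m - 1) * (m - 2) / 2) * (m : K) ^ m * a ^ (m - 1) := by
        rw [sign_aux m hm]
end
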